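/- The sequence n ↦ log|A_n| / f_n converges as n → ∞. -/

import Mathlib

/-- Sets of inflated random Fibonacci words: A₁ = {0}, A₂ = {1},
    Aₙ = Aₙ₋₁Aₙ₋₂ ∪ Aₙ₋₂Aₙ₋₁ for n ≥ 3 (A₀ = ∅). -/
def wordSet : ℕ → Set (List Bool)
  | 0 => ∅
  | 1 => {[false]}
  | 2 => {[true]}
  | (n + 3) => Set.image2 (· ++ ·) (wordSet (n + 2)) (wordSet (n + 1)) ∪
      Set.image2 (· ++ ·) (wordSet (n + 1)) (wordSet (n + 2))

/-- Concatenation of sets of words: UV = {uv : u ∈ U, v ∈ V}. -/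
def cat (U V : Set (List Bool)) : Set (List Bool) := Set.image2 (· ++ ·) U V

/-- W[a,b]: the set of segments wₐ…w_b (1-based indexing) of words in W. -/
def seg (W : Set (List Bool)) (a b : ℕ) : Set (List Bool) :=
  (fun w => (w.drop (a - 1)).take (b - a + 1)) '' W

/-- F(S, m): the set of all contiguous factors of length m of words in S. -/
def factorSet (S : Set (List Bool)) (m : ℕ) : Set (List Bool) :=
  {x | x.length = m ∧ ∃ w ∈ S, x <:+: w}

/-- Fₙ: the set of factors of length fₙ occurring in any inflated word. -/
def Fn (n : ℕ) : Set (List Bool) := ⋃ m ≥ 1, factorSet (wordSet m) (Nat.fib n)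

/-! The crossed difference `dₙ = fₙ aₙ₊₁ - fₙ₊₁ aₙ` of `aₙ = log |Aₙ|` satisfies
`dₙ₊₁ = fₙ₊₁ eₙ - dₙ` with `eₙ = aₙ₊₂ - aₙ₊₁ - aₙ ∈ [0, log 2]`, because
`|Aₙ₋₁| |Aₙ₋₂| ≤ |Aₙ| ≤ 2 |Aₙ₋₁| |Aₙ₋₂|`; the lower bound holds since all words of `Aₙ₋₁`
have length `fₙ₋₁`, so concatenation is injective on `Aₙ₋₁ × Aₙ₋₂`. Hence `dₙ = O(fₙ₊₂)`, so
consecutive ratios `aₙ / fₙ` differ by `dₙ / (fₙ fₙ₊₁) = O(1 / fₙ)`, which is summable since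
`fₙ` grows geometrically. -/

open Filter Topology
open Nat (fib fib_add_two)
open scoped goldenRatio

lemma summable_inv_fib : Summable fun n ↦ (fib n : ℝ)⁻¹ := by
  refine summable_of_ratio_test_tendsto_lt_one (l := -ψ)
    (by linarith [Real.neg_one_lt_goldenConj]) ?_ ?_
  · filter_upwards [eventually_ne_atTop 0] with n hn
    simpa [Nat.fib_eq_zero] using hn
  · convert tendsto_fib_div_fib_succ_atTop using 2 with n
    rw [norm_inv, norm_inv, inv_div_inv, Real.norm_natCast, Real.norm_natCast]

section FibonacciRatio

variable {a : ℕ → ℝ} {C : ℝ}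

lemma abs_fib_mul_sub_fib_mul_le (h : ∀ n, |a (n + 2) - a (n + 1) - a n| ≤ C) (n : ℕ) :
    |fib n * a (n + 1) - fib (n + 1) * a n| ≤ |a 0| + C * fib (n + 2) := by
  induction n with
  | zero => simpa using (abs_nonneg _).trans (h 0)
  | succ n ih =>
    have hrec : (fib (n + 1) * a (n + 2) - fib (n + 2) * a (n + 1) : ℝ) =
        fib (n + 1) * (a (n + 2) - a (n + 1) - a n) - (fib n * a (n + 1) - fib (n + 1) * a n) := by
      rw [fib_add_two]; push_cast; ring
    calc |(fib (n + 1) * a (n + 2) - fib (n + 2) * a (n + 1) : ℝ)|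
        ≤ fib (n + 1) * C + |fib n * a (n + 1) - fib (n + 1) * a n| := by
          rw [hrec]
          refine (abs_sub _ _).trans ?_
          gcongr
          rw [abs_mul, Nat.abs_cast]
          exact mul_le_mul_of_nonneg_left (h n) (Nat.cast_nonneg _)
      _ ≤ |a 0| + C * fib (n + 3) := by
          rw [fib_add_two (n := n + 1)]; push_cast; linarith

lemma abs_div_fib_succ_sub_div_fib_le (h : ∀ n, |a (n + 2) - a (n + 1) - a n| ≤ C) {n : ℕ}
    (hn : n ≠ 0) : |a (n + 1) / fib (n + 1) - a n / fib n| ≤ (|a 0| + 2 * C) / fib n := by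
  have hC : 0 ≤ C := (abs_nonneg _).trans (h 0)
  have hfn : (0 : ℝ) < fib n := by simpa [pos_iff_ne_zero, Nat.fib_eq_zero] using hn
  have hfn1 : (1 : ℝ) ≤ fib (n + 1) := by exact_mod_cast Nat.fib_pos.mpr n.succ_pos
  have hfn2 : (fib (n + 2) : ℝ) ≤ 2 * fib (n + 1) := by
    rw [fib_add_two]; push_cast
    linarith [(Nat.cast_le (α := ℝ)).mpr (Nat.fib_le_fib_succ (n := n))]
  have hden : (0 : ℝ) < fib (n + 1) * fib n := by positivity
  rw [div_sub_div _ _ (zero_lt_one.trans_le hfn1).ne' hfn.ne', abs_div, abs_of_pos hden,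
    div_le_div_iff₀ hden hfn, mul_comm (a (n + 1))]
  calc |fib n * a (n + 1) - fib (n + 1) * a n| * fib n
      ≤ (|a 0| + C * fib (n + 2)) * fib n :=
        mul_le_mul_of_nonneg_right (abs_fib_mul_sub_fib_mul_le h n) hfn.le
    _ ≤ (|a 0| + 2 * C) * fib (n + 1) * fib n := by
        gcongr
        nlinarith [abs_nonneg (a 0)]
    _ = (|a 0| + 2 * C) * (fib (n + 1) * fib n) := mul_assoc _ _ _

theorem exists_tendsto_div_fib (h : ∀ n, |a (n + 2) - a (n + 1) - a n| ≤ C) :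
    ∃ L, Tendsto (fun n ↦ a n / fib n) atTop (𝓝 L) :=
  cauchySeq_tendsto_of_complete <| cauchySeq_of_summable_dist <|
    (summable_inv_fib.mul_left (|a 0| + 2 * C)).of_norm_bounded_eventually_nat <| by
      filter_upwards [eventually_ne_atTop 0] with n hn
      rw [Real.norm_eq_abs, abs_dist, dist_comm, Real.dist_eq, ← div_eq_mul_inv]
      exact abs_div_fib_succ_sub_div_fib_le h hn

end FibonacciRatio

section Concatenation

variable {U V : Set (List Bool)}

lemma Set.Finite.cat (hU : U.Finite) (hV : V.Finite) : (cat U V).Finite :=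
  hU.image2 _ hV

lemma ncard_cat_le (hU : U.Finite) (hV : V.Finite) : (cat U V).ncard ≤ U.ncard * V.ncard := by
  rw [cat, ← Set.image_uncurry_prod, ← Set.ncard_prod]
  exact Set.ncard_image_le (hU.prod hV)

lemma ncard_cat_of_length_eq {k : ℕ} (hU : ∀ u ∈ U, u.length = k) :
    (cat U V).ncard = U.ncard * V.ncard := by
  rw [cat, ← Set.image_uncurry_prod, ← Set.ncard_prod]
  refine Set.InjOn.ncard_image ?_
  rintro ⟨u, v⟩ huv ⟨u', v'⟩ huv' heq
  obtain ⟨rfl, rfl⟩ := List.append_inj heq ((hU u huv.1).trans (hU u' huv'.1).symm)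
  rfl

end Concatenation

lemma wordSet_add_three (n : ℕ) :
    wordSet (n + 3) = cat (wordSet (n + 2)) (wordSet (n + 1)) ∪
      cat (wordSet (n + 1)) (wordSet (n + 2)) :=
  rfl

theorem length_of_mem_wordSet : ∀ {n : ℕ} {w : List Bool}, w ∈ wordSet n → w.length = fib n
  | 1, _, rfl | 2, _, rfl => rfl
  | n + 3, w, hw => by
    have hfib : fib (n + 3) = fib (n + 1) + fib (n + 2) := fib_add_two
    rw [wordSet_add_three] at hw
    rcases hw with ⟨u, hu, v, hv, rfl⟩ | ⟨u, hu, v, hv, rfl⟩ <;>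
      simp only [List.length_append, length_of_mem_wordSet hu, length_of_mem_wordSet hv] <;>
      omega

theorem wordSet_finite : ∀ n, (wordSet n).Finite
  | 0 => Set.finite_empty
  | 1 => Set.finite_singleton _
  | 2 => Set.finite_singleton _
  | n + 3 => by
    rw [wordSet_add_three]
    exact ((wordSet_finite _).cat (wordSet_finite _)).union
      ((wordSet_finite _).cat (wordSet_finite _))

theorem ncard_wordSet_add_three_le (n : ℕ) :
    (wordSet (n + 3)).ncard ≤ 2 * ((wordSet (n + 2)).ncard * (wordSet (n + 1)).ncard) := by
  rw [wordSet_add_three]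
  refine (Set.ncard_union_le _ _).trans ?_
  have := ncard_cat_le (wordSet_finite (n + 2)) (wordSet_finite (n + 1))
  have := ncard_cat_le (wordSet_finite (n + 1)) (wordSet_finite (n + 2))
  nlinarith

theorem ncard_mul_ncard_le_ncard_wordSet_add_three (n : ℕ) :
    (wordSet (n + 2)).ncard * (wordSet (n + 1)).ncard ≤ (wordSet (n + 3)).ncard := by
  rw [← ncard_cat_of_length_eq fun _ ↦ length_of_mem_wordSet]
  exact Set.ncard_le_ncard Set.subset_union_left (wordSet_finite (n + 3))

theorem ncard_wordSet_pos : ∀ {n}, n ≠ 0 → 0 < (wordSet n).ncard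
  | 1, _ | 2, _ => by simp [wordSet]
  | n + 3, _ =>
    (Nat.mul_pos (ncard_wordSet_pos (n := n + 2) (by omega))
      (ncard_wordSet_pos (n := n + 1) (by omega))).trans_le
      (ncard_mul_ncard_le_ncard_wordSet_add_three n)

theorem abs_log_ncard_wordSet_sub_le : ∀ n : ℕ,
    |Real.log (wordSet (n + 2)).ncard - Real.log (wordSet (n + 1)).ncard -
      Real.log (wordSet n).ncard| ≤ Real.log 2
  -- `A₀ = ∅` and `Real.log 0 = 0`, so this case reads `|0 - 0 - 0| ≤ log 2`.
  | 0 => by simpa [wordSet] using Real.log_nonneg one_le_two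
  | n + 1 => by
    have hx : (0 : ℝ) < (wordSet (n + 2)).ncard := by exact_mod_cast ncard_wordSet_pos (by omega)
    have hy : (0 : ℝ) < (wordSet (n + 1)).ncard := by exact_mod_cast ncard_wordSet_pos (by omega)
    have hz : (0 : ℝ) < (wordSet (n + 3)).ncard := by exact_mod_cast ncard_wordSet_pos (by omega)
    have hlo : ((wordSet (n + 2)).ncard * (wordSet (n + 1)).ncard : ℝ) ≤
        (wordSet (n + 3)).ncard := by
      exact_mod_cast ncard_mul_ncard_le_ncard_wordSet_add_three n
    have hhi : ((wordSet (n + 3)).ncard : ℝ) ≤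
        2 * ((wordSet (n + 2)).ncard * (wordSet (n + 1)).ncard) := by
      exact_mod_cast ncard_wordSet_add_three_le n
    rw [sub_sub, ← Real.log_mul hx.ne' hy.ne', ← Real.log_div hz.ne' (by positivity),
      abs_of_nonneg (Real.log_nonneg ((one_le_div (by positivity)).mpr hlo))]
    exact Real.log_le_log (by positivity) ((div_le_iff₀ (by positivity)).mpr hhi)

theorem stmt15 :
    ∃ L : ℝ, Filter.Tendsto (fun n : ℕ => Real.log (wordSet n).ncard / (Nat.fib n : ℝ))
      Filter.atTop (nhds L) :=
  exists_tendsto_div_fib abs_log_ncard_wordSet_sub_le
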